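/- If a continuous map h on an infinite metric space X is topologically transitive and has dense periodic points, then h has sensitive dependence on initial conditions: there exists δ > 0 such that for every x ∈ X and every ε > 0 there exist y ∈ X and n ∈ ℕ with d(x,y) < ε and d(hⁿx, hⁿy) ≥ δ. -/
import Mathlib

/-- If `p` is periodic with period `m`, every iterate of `p` equals an iterate
with exponent `< m`. -/
lemma iter_mod_aux {X : Type*} (h : X → X) {p : X} {m : ℕ}
    (hp : h^[m] p = p) (s : ℕ) : h^[s] p = h^[s % m] p := by
  conv_lhs => rw [← Nat.mod_add_div s m]
  rw [Function.iterate_add_apply, Function.iterate_mul,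
    Function.iterate_fixed hp]

lemma iter_mul_fixed {X : Type*} (h : X → X) {p : X} {m : ℕ}
    (hp : h^[m] p = p) (j : ℕ) : h^[m * j] p = p := by
  rw [Function.iterate_mul]
  exact Function.iterate_fixed hp j

/-- Banks–Brooks–Cairns–Davis–Stacey: transitivity plus dense periodic points
implies sensitive dependence on initial conditions. -/
theorem transitive_densePeriodic_sensitive
    {X : Type*} [MetricSpace X] [Infinite X] (h : X → X) (hcont : Continuous h)
    (htrans : ∀ U V : Set X, IsOpen U → IsOpen V → U.Nonempty → V.Nonempty →
      ∃ n : ℕ, (h^[n] '' U ∩ V).Nonempty)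
    (hper : Dense {x : X | ∃ n : ℕ, 1 ≤ n ∧ h^[n] x = x}) :
    ∃ δ > 0, ∀ x : X, ∀ ε > 0, ∃ y : X, ∃ n : ℕ,
      dist x y < ε ∧ δ ≤ dist (h^[n] x) (h^[n] y) := by
  classical
  -- a first periodic point
  obtain ⟨p0, m0, hm0, hp0⟩ := hper.nonempty
  set orbP : Finset X := (Finset.range m0).image (fun i => h^[i] p0) with horbP
  have horbPmem : ∀ s : ℕ, h^[s] p0 ∈ orbP := by
    intro s
    rw [iter_mod_aux h hp0 s]
    exact Finset.mem_image_of_mem _ (Finset.mem_range.2 (Nat.mod_lt _ hm0))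
  -- a second periodic point with orbit disjoint from that of p0
  obtain ⟨z, hz⟩ := Infinite.exists_notMem_finset orbP
  have hWopen : IsOpen ((↑orbP : Set X)ᶜ) := orbP.finite_toSet.isClosed.isOpen_compl
  obtain ⟨q0, ⟨n0, hn0, hq0⟩, hq0W⟩ := hper.exists_mem_open hWopen ⟨z, hz⟩
  set orbQ : Finset X := (Finset.range n0).image (fun i => h^[i] q0) with horbQ
  have horbQmem : ∀ s : ℕ, h^[s] q0 ∈ orbQ := by
    intro s
    rw [iter_mod_aux h hq0 s]
    exact Finset.mem_image_of_mem _ (Finset.mem_range.2 (Nat.mod_lt _ hn0))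
  -- orbits are disjoint
  have hdisj : ∀ b ∈ orbQ, b ∉ orbP := by
    intro b hb hbP
    obtain ⟨i, _, hib⟩ := Finset.mem_image.1 hb
    obtain ⟨j, _, hjb⟩ := Finset.mem_image.1 hbP
    have hiq : h^[i] q0 = h^[j] p0 := by rw [hib, hjb]
    have hfix : h^[n0 * i] q0 = q0 := iter_mul_fixed h hq0 i
    have hle : i ≤ n0 * i := Nat.le_mul_of_pos_left i hn0
    have : q0 = h^[(n0 * i - i) + j] p0 := by
      calc q0 = h^[n0 * i] q0 := hfix.symm
        _ = h^[(n0 * i - i) + i] q0 := by rw [Nat.sub_add_cancel hle]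
        _ = h^[n0 * i - i] (h^[i] q0) := Function.iterate_add_apply _ _ _ _
        _ = h^[n0 * i - i] (h^[j] p0) := by rw [hiq]
        _ = h^[(n0 * i - i) + j] p0 := (Function.iterate_add_apply _ _ _ _).symm
    exact hq0W (by rw [this]; exact_mod_cast horbPmem _)
  -- minimum distance between the two orbits
  have horbPne : orbP.Nonempty := ⟨p0, by simpa using horbPmem 0⟩
  have horbQne : orbQ.Nonempty := ⟨q0, by simpa using horbQmem 0⟩
  set D : Finset ℝ := (orbP ×ˢ orbQ).image (fun pr => dist pr.1 pr.2) with hD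
  have hDne : D.Nonempty := Finset.Nonempty.image (horbPne.product horbQne) _
  set δ0 : ℝ := D.min' hDne with hδ0
  have hδ0pos : 0 < δ0 := by
    obtain ⟨pr, hpr, hpr'⟩ := Finset.mem_image.1 (D.min'_mem hDne)
    obtain ⟨ha, hb⟩ := Finset.mem_product.1 hpr
    have hne : pr.1 ≠ pr.2 := fun e => hdisj _ hb (e ▸ ha)
    rw [hδ0, ← hpr']
    exact dist_pos.2 hne
  have hδ0le : ∀ a ∈ orbP, ∀ b ∈ orbQ, δ0 ≤ dist a b := by
    intro a ha b hb
    exact D.min'_le _ (Finset.mem_image.2 ⟨(a, b), Finset.mem_product.2 ⟨ha, hb⟩, rfl⟩)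
  set δ : ℝ := δ0 / 8 with hδ
  have hδpos : 0 < δ := by positivity
  refine ⟨δ, hδpos, ?_⟩
  intro x ε hε
  set η : ℝ := min ε δ with hη
  have hηpos : 0 < η := lt_min hε hδpos
  -- a periodic point p within η of x
  obtain ⟨p, ⟨m, hm, hpfix⟩, hpball⟩ :=
    hper.exists_mem_open Metric.isOpen_ball (Metric.nonempty_ball.2 hηpos : (Metric.ball x η).Nonempty)
  have hxp : dist x p < η := by
    rw [dist_comm]; exact Metric.mem_ball.1 hpball
  -- a periodic point q whose whole orbit is ≥ 4δ from x
  have hfarq : ∃ q : X, (∃ nq : ℕ, 1 ≤ nq ∧ h^[nq] q = q) ∧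
      ∀ k : ℕ, 4 * δ ≤ dist x (h^[k] q) := by
    by_cases hc : ∀ b ∈ orbQ, 4 * δ ≤ dist x b
    · exact ⟨q0, ⟨n0, hn0, hq0⟩, fun k => hc _ (horbQmem k)⟩
    · push_neg at hc
      obtain ⟨b, hb, hbx⟩ := hc
      refine ⟨p0, ⟨m0, hm0, hp0⟩, fun k => ?_⟩
      have h1 := hδ0le _ (horbPmem k) b hb
      have h2 := dist_triangle (h^[k] p0) x b
      have h3 : dist (h^[k] p0) x = dist x (h^[k] p0) := dist_comm _ _
      have : δ0 = 8 * δ := by rw [hδ]; ring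
      linarith
  obtain ⟨q, ⟨nq, hnq, hqfix⟩, hfar⟩ := hfarq
  -- open sets for transitivity
  set U : Set X := Metric.ball x η with hU
  set V : Set X := ⋂ i ∈ Finset.range (m + 1), h^[i] ⁻¹' Metric.ball (h^[i] q) δ with hV
  have hVopen : IsOpen V := by
    apply isOpen_biInter_finset
    intro i _
    exact (Metric.isOpen_ball).preimage (hcont.iterate i)
  have hqV : q ∈ V := by
    rw [hV]
    simp only [Set.mem_iInter, Set.mem_preimage, Metric.mem_ball]
    intro i _
    simpa using hδpos
  obtain ⟨n, zz, hzz⟩ := htrans U V Metric.isOpen_ball hVopen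
    (Metric.nonempty_ball.2 hηpos) ⟨q, hqV⟩
  obtain ⟨⟨y, hyU, hyz⟩, hzV⟩ := hzz
  have hynV : h^[n] y ∈ V := hyz ▸ hzV
  -- arithmetic: choose N a multiple of m with n < N ≤ n + m
  set N : ℕ := m * (n / m + 1) with hN
  have hkfacts : n ≤ N ∧ N - n ≤ m := by
    have h1 := Nat.mod_add_div n m
    have h2 := Nat.mod_lt n (by omega : 0 < m)
    have hN' : N = m * (n / m) + m := by rw [hN, Nat.mul_succ]
    rw [hN']
    omega
  set k : ℕ := N - n with hk
  have hkn : k + n = N := Nat.sub_add_cancel hkfacts.1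
  have hkm : k ∈ Finset.range (m + 1) := Finset.mem_range.2 (by omega)
  -- key distance estimates
  have hNy : h^[N] y = h^[k] (h^[n] y) := by
    rw [← Function.iterate_add_apply, hkn]
  have hNp : h^[N] p = p := iter_mul_fixed h hpfix _
  have hclose : dist (h^[N] y) (h^[k] q) < δ := by
    rw [hNy]
    have := Set.mem_iInter₂.1 hynV k hkm
    simpa using this
  have hfar' : 4 * δ ≤ dist x (h^[k] q) := hfar k
  have hxpδ : dist x p < δ := lt_of_lt_of_le hxp (min_le_right _ _)
  have htri1 : dist x (h^[k] q) ≤ dist x p + dist p (h^[N] y) + dist (h^[N] y) (h^[k] q) :=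
    dist_triangle4 _ _ _ _
  have htri2 : dist p (h^[N] y) ≤ dist (h^[N] x) p + dist (h^[N] x) (h^[N] y) := by
    have := dist_triangle p (h^[N] x) (h^[N] y)
    rw [dist_comm p (h^[N] x)] at this
    exact this
  have hηε : η ≤ ε := min_le_left _ _
  by_cases hcase : δ ≤ dist (h^[N] x) p
  · refine ⟨p, N, lt_of_lt_of_le hxp hηε, ?_⟩
    rw [hNp]; exact hcase
  · refine ⟨y, N, ?_, by linarith⟩
    have : dist y x < η := Metric.mem_ball.1 hyU
    rw [dist_comm] at this
    exact lt_of_lt_of_le this hηε
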